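/- Let d, L ∈ ℕ, and let H be a bounded selfadjoint operator on ℓ²(ℤ^d, ℂ^L) whose matrix elements h(x, y) = ⟨x|H|y⟩ ∈ M_L(ℂ) satisfy: (finite range) h(x, y) = 0 whenever max_{1≤j≤d} |x_j − y_j| > R, and (periodicity) h(x + p_j e_j, y + p_j e_j) = h(x, y) for periods p_j ∈ ℕ and the standard unit vectors e_j, for all j = 1, …, d. Let ρ ∈ ℕ be such that 2ρ is an integer multiple of each p_j, and let H^per_ρ be the Hermitian matrix indexed by {−ρ+1, …, ρ}^d × {1, …, L} with entries H^per_ρ(x, y) = ∑_{a ∈ ℤ^d} h(x, y + 2ρa) (a finite sum by finite range). Then the spectrum of the matrix H^per_ρ is contained in the spectrum of the bounded operator H. -/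

import Mathlib

noncomputable section

/-- The Hilbert space `ℓ²(ℤ^d, ℂ^L)`. -/
abbrev Ell2 (d L : ℕ) := lp (fun _ : (Fin d → ℤ) × Fin L => ℂ) 2

/-- The matrix element `⟨x, i| H |y, l⟩` of an operator `H` on `ℓ²(ℤ^d, ℂ^L)`. -/
def matElem {d L : ℕ} (H : Ell2 d L →L[ℂ] Ell2 d L) (x y : Fin d → ℤ) (i l : Fin L) : ℂ :=
  inner ℂ (lp.single 2 (x, i) (1 : ℂ)) (H (lp.single 2 (y, l) (1 : ℂ)))

/-- The identification of `Fin (2ρ)` with `{-ρ+1, …, ρ} ⊆ ℤ`. -/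
def idxZ (ρ : ℕ) (t : Fin (2 * ρ)) : ℤ := (t : ℤ) - ρ + 1

/-- The finite-volume restriction `H^per_ρ` of `H` with periodic boundary conditions,
with entries `H^per_ρ(x, y) = ∑_{a ∈ ℤ^d} ⟨x|H|y + 2ρa⟩` (a finite sum for a finite
range operator). -/
def perMat {d L : ℕ} (H : Ell2 d L →L[ℂ] Ell2 d L) (ρ : ℕ) :
    Matrix ((Fin d → Fin (2 * ρ)) × Fin L) ((Fin d → Fin (2 * ρ)) × Fin L) ℂ :=
  fun x y => ∑ᶠ a : Fin d → ℤ,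
    matElem H (fun j => idxZ ρ (x.1 j)) (fun j => idxZ ρ (y.1 j) + 2 * ρ * a j) x.2 y.2

/-!
Let `v` be an eigenvector of `H^per_ρ` with eigenvalue `μ`. Its `2ρ`-periodic extension `ṽ` to
`ℤ^d` solves `Hṽ = μṽ` pointwise: `H` commutes with translations by `2ρℤ^d`, and the sum over
`a` defining `H^per_ρ` is exactly the sum of `h(x, ·)` over the periodic copies of a site.
Truncating `ṽ` to a block of `n^d` periods gives `w_n ∈ ℓ²` with `‖w_n‖² ≥ c n^d`, while finite
range makes `(μ - H) w_n` bounded and supported in the `R`-neighbourhood of the boundary of the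
block, so `‖(μ - H) w_n‖² = O(n^{d-1})`. Hence `μ - H` is not bounded below, and `μ ∈ σ(H)`.
-/

open Finset Filter Topology
open scoped Matrix

lemma lp.norm_sq_eq_sum {α : Type*} {E : α → Type*} [∀ i, NormedAddCommGroup (E i)]
    (f : lp E 2) (s : Finset α) (hf : ∀ i ∉ s, f i = 0) : ‖f‖ ^ 2 = ∑ i ∈ s, ‖f i‖ ^ 2 := by
  have h := lp.norm_rpow_eq_tsum (p := 2) (by norm_num) f
  simp only [ENNReal.toReal_ofNat, Real.rpow_two] at h
  rw [h, tsum_eq_sum fun i hi => by simp [hf i hi]]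

lemma ContinuousLinearMap.exists_norm_le_of_notMem_spectrum {𝕜 E : Type*}
    [NontriviallyNormedField 𝕜] [NormedAddCommGroup E] [NormedSpace 𝕜 E] {T : E →L[𝕜] E}
    {μ : 𝕜} (h : μ ∉ spectrum 𝕜 T) : ∃ K, ∀ w, ‖w‖ ≤ K * ‖μ • w - T w‖ := by
  obtain ⟨u, hu⟩ := spectrum.notMem_iff.mp h
  refine ⟨‖(↑u⁻¹ : E →L[𝕜] E)‖, fun w => ?_⟩
  have hw : μ • w - T w = (u : E →L[𝕜] E) w := by simp [hu, Algebra.algebraMap_eq_smul_one]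
  calc ‖w‖ = ‖(↑u⁻¹ : E →L[𝕜] E) ((u : E →L[𝕜] E) w)‖ := by
        rw [← comp_apply, ← mul_def, u.inv_mul, one_apply_eq_self]
    _ ≤ _ := by rw [hw]; exact le_opNorm _ _

lemma Matrix.exists_mulVec_eq_smul_of_mem_spectrum {K n : Type*} [Field K] [Fintype n]
    [DecidableEq n] {A : Matrix n n K} {μ : K} (hμ : μ ∈ spectrum K A) :
    ∃ v ≠ 0, A *ᵥ v = μ • v := by
  rw [← Matrix.spectrum_toLin', ← Module.End.hasEigenvalue_iff_mem_spectrum] at hμ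
  obtain ⟨v, hv⟩ := hμ.exists_hasEigenvector
  exact ⟨v, hv.2, hv.apply_eq_smul⟩

section OrderedAddCommGroup

variable {α : Type*} [AddCommGroup α] [PartialOrder α] [IsOrderedAddMonoid α]
  [LocallyFiniteOrder α] {a b r z : α}

lemma Finset.Icc_sub_add_subset_Icc (hz : z ∈ Icc (a + r) (b - r)) :
    Icc (z - r) (z + r) ⊆ Icc a b := by
  rw [mem_Icc] at hz
  intro y hy
  rw [mem_Icc] at hy ⊢
  exact ⟨(le_sub_iff_add_le.mpr hz.1).trans hy.1, hy.2.trans (le_sub_iff_add_le.mp hz.2)⟩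

lemma Finset.disjoint_Icc_sub_add_Icc (hz : z ∉ Icc (a - r) (b + r)) :
    Disjoint (Icc (z - r) (z + r)) (Icc a b) := by
  refine disjoint_left.mpr fun y hy hy' => hz ?_
  rw [mem_Icc] at hy hy' ⊢
  exact ⟨sub_le_iff_le_add.mpr (hy'.1.trans hy.2), sub_le_iff_le_add.mp (hy.1.trans hy'.2)⟩

end OrderedAddCommGroup

namespace LatticeOperator

variable {d L : ℕ} {H : Ell2 d L →L[ℂ] Ell2 d L} {R ρ : ℕ}

lemma apply_single (H : Ell2 d L →L[ℂ] Ell2 d L) (x y : Fin d → ℤ) (i l : Fin L) :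
    H (lp.single 2 (y, l) 1) (x, i) = matElem H x y i l := by
  simp [matElem, lp.inner_single_left]

lemma norm_matElem_le (H : Ell2 d L →L[ℂ] Ell2 d L) (x y : Fin d → ℤ) (i l : Fin L) :
    ‖matElem H x y i l‖ ≤ ‖H‖ := by
  have hnorm : ∀ k, ‖(lp.single 2 k (1 : ℂ) : Ell2 d L)‖ = 1 := fun k => by
    simp [lp.norm_single (p := 2) (by norm_num) k]
  calc ‖matElem H x y i l‖ ≤ ‖(lp.single 2 (x, i) 1 : Ell2 d L)‖ * ‖H (lp.single 2 (y, l) 1)‖ :=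
        norm_inner_le_norm _ _
    _ ≤ ‖H‖ := by simpa [hnorm] using H.le_opNorm (lp.single 2 (y, l) 1)

def periodLattice (H : Ell2 d L →L[ℂ] Ell2 d L) : AddSubgroup (Fin d → ℤ) where
  carrier := {c | ∀ x y i l, matElem H (x + c) (y + c) i l = matElem H x y i l}
  zero_mem' := by simp
  add_mem' {a b} ha hb x y i l := by rw [← add_assoc, ← add_assoc, hb, ha]
  neg_mem' {c} hc x y i l := by rw [← hc (x + -c), neg_add_cancel_right, neg_add_cancel_right]

lemma mem_periodLattice {c : Fin d → ℤ} :
    c ∈ periodLattice H ↔ ∀ x y i l, matElem H (x + c) (y + c) i l = matElem H x y i l :=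
  Iff.rfl

lemma mem_periodLattice_of_dvd {p : Fin d → ℕ}
    (hper : ∀ (j : Fin d) x y i l,
      matElem H (x + (p j : ℤ) • Pi.single j 1) (y + (p j : ℤ) • Pi.single j 1) i l =
        matElem H x y i l)
    {c : Fin d → ℤ} (hc : ∀ j, (p j : ℤ) ∣ c j) : c ∈ periodLattice H := by
  rw [← Finset.univ_sum_single c]
  refine AddSubgroup.sum_mem _ fun j _ => ?_
  obtain ⟨m, hm⟩ := hc j
  have : Pi.single j (c j) = m • ((p j : ℤ) • (Pi.single j 1 : Fin d → ℤ)) := by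
    rw [hm, smul_smul, ← Pi.single_smul, smul_eq_mul, mul_one, mul_comm]
  rw [this]
  exact AddSubgroup.zsmul_mem _ (mem_periodLattice.mpr (hper j)) m

def IsFiniteRange (H : Ell2 d L →L[ℂ] Ell2 d L) (R : ℕ) : Prop :=
  ∀ x y i l, (∃ j, (R : ℤ) < |x j - y j|) → matElem H x y i l = 0

lemma IsFiniteRange.matElem_eq_zero (hR : IsFiniteRange H R) {x y : Fin d → ℤ}
    (hy : y ∉ Icc (x - R) (x + R)) (i l : Fin L) : matElem H x y i l = 0 := by
  refine hR x y i l ?_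
  simp only [mem_Icc, Pi.le_def, not_and_or, not_forall, not_le] at hy
  obtain ⟨j, hj⟩ | ⟨j, hj⟩ := hy <;>
  · refine ⟨j, lt_abs.mpr ?_⟩
    simp only [Pi.sub_apply, Pi.add_apply, Pi.natCast_apply] at hj
    omega

lemma IsFiniteRange.matElem_mul_eq_zero (hR : IsFiniteRange H R) (f : (Fin d → ℤ) × Fin L → ℂ)
    {x : Fin d → ℤ} (i : Fin L) {k : (Fin d → ℤ) × Fin L}
    (hk : k ∉ Icc (x - R) (x + R) ×ˢ univ) : matElem H x k.1 i k.2 * f k = 0 := by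
  rw [mem_product, not_and_or] at hk
  rw [hR.matElem_eq_zero (hk.resolve_right (not_not.mpr (mem_univ _))), zero_mul]

/-- `H` acting through its matrix on functions that need not be square-summable. -/
def kernelApply (H : Ell2 d L →L[ℂ] Ell2 d L) (f : (Fin d → ℤ) × Fin L → ℂ)
    (k : (Fin d → ℤ) × Fin L) : ℂ :=
  ∑ᶠ k', matElem H k.1 k'.1 k.2 k'.2 * f k'

lemma IsFiniteRange.kernelApply_eq_sum (hR : IsFiniteRange H R)
    (f : (Fin d → ℤ) × Fin L → ℂ) (x : Fin d → ℤ) (i : Fin L) :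
    kernelApply H f (x, i) = ∑ k ∈ Icc (x - R) (x + R) ×ˢ univ, matElem H x k.1 i k.2 * f k :=
  finsum_eq_sum_of_support_subset _ fun _ hk =>
    not_not.mp fun h => hk (hR.matElem_mul_eq_zero f i h)

lemma IsFiniteRange.apply_eq_kernelApply (hR : IsFiniteRange H R) (f : Ell2 d L) :
    ⇑(H f) = kernelApply H f := by
  ext ⟨x, i⟩
  have hsum : HasSum (fun k => matElem H x k.1 i k.2 * f k) (H f (x, i)) := by
    have := ((lp.hasSum_single (by norm_num) f).mapL H).mapL
      (innerSL ℂ (lp.single 2 (x, i) (1 : ℂ) : Ell2 d L))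
    have hcoord : ∀ g : Ell2 d L, innerSL ℂ (lp.single 2 (x, i) (1 : ℂ) : Ell2 d L) g = g (x, i) :=
      fun g => by simp [lp.inner_single_left]
    have hterm : ∀ k, H (lp.single 2 k (f k)) (x, i) = matElem H x k.1 i k.2 * f k := fun k => by
      have : lp.single 2 k (f k) = f k • (lp.single 2 k 1 : Ell2 d L) := by
        rw [← lp.single_smul, smul_eq_mul, mul_one]
      rw [this, map_smul, lp.coeFn_smul, Pi.smul_apply, apply_single, smul_eq_mul, mul_comm]
    simpa only [hcoord, hterm] using this
  rw [hR.kernelApply_eq_sum, hsum.unique (hasSum_sum_of_ne_finset_zero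
    fun k hk => hR.matElem_mul_eq_zero f i hk)]

lemma kernelApply_add_of_mem_periodLattice {f : (Fin d → ℤ) × Fin L → ℂ} {c : Fin d → ℤ}
    (hc : c ∈ periodLattice H) (hf : ∀ x i, f (x + c, i) = f (x, i)) (x : Fin d → ℤ)
    (i : Fin L) : kernelApply H f (x + c, i) = kernelApply H f (x, i) := by
  unfold kernelApply
  rw [← finsum_comp_equiv ((Equiv.addRight c).prodCongr (Equiv.refl (Fin L)))]
  congr 1
  funext ⟨y, l⟩
  exact congrArg₂ (· * ·) (hc x y i l) (hf y l)

def restrictVec (B : Finset (Fin d → ℤ)) (f : (Fin d → ℤ) × Fin L → ℂ) : Ell2 d L :=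
  ⟨fun k => if k.1 ∈ B then f k else 0,
    (memℓp_zero ((B ×ˢ univ).finite_toSet.subset fun k hk => by
      by_contra hkB
      simp_all)).of_exponent_ge (by norm_num)⟩

lemma restrictVec_apply (B : Finset (Fin d → ℤ)) (f : (Fin d → ℤ) × Fin L → ℂ)
    (k : (Fin d → ℤ) × Fin L) : restrictVec B f k = if k.1 ∈ B then f k else 0 :=
  rfl

lemma card_Icc_sub_add (x : Fin d → ℤ) (R : ℕ) : #(Icc (x - R) (x + R)) = (2 * R + 1) ^ d := by
  have hside : ∀ j, (x j + R + 1 - (x j - R)).toNat = 2 * R + 1 := fun j => by omega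
  simp [Pi.card_Icc, Int.card_Icc, hside]

section Eigenfunction

variable {f : (Fin d → ℤ) × Fin L → ℂ} {μ : ℂ}

/-- Since `f` is a generalized eigenfunction, `(μ - H)(1_B f)` only sees the sites `k` near `x`
lying on the other side of the boundary of `B`. -/
lemma IsFiniteRange.sub_apply_restrictVec (hR : IsFiniteRange H R) (hf : kernelApply H f = μ • f)
    (B : Finset (Fin d → ℤ)) (x : Fin d → ℤ) (i : Fin L) :
    (μ • restrictVec B f - H (restrictVec B f)) (x, i) =
      ∑ k ∈ Icc (x - R) (x + R) ×ˢ univ,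
        matElem H x k.1 i k.2 * f k * ((if x ∈ B then 1 else 0) - (if k.1 ∈ B then 1 else 0)) := by
  have heig := congrFun hf (x, i)
  rw [hR.kernelApply_eq_sum] at heig
  rw [lp.coeFn_sub, Pi.sub_apply, lp.coeFn_smul, Pi.smul_apply, hR.apply_eq_kernelApply,
    hR.kernelApply_eq_sum]
  simp only [restrictVec_apply, mul_sub, sum_sub_distrib, ← sum_mul, heig]
  split_ifs <;> simp [mul_ite]

lemma IsFiniteRange.sub_apply_restrictVec_eq_zero (hR : IsFiniteRange H R)
    (hf : kernelApply H f = μ • f) {B : Finset (Fin d → ℤ)} {x : Fin d → ℤ}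
    (hx : Icc (x - R) (x + R) ⊆ B ∨ Disjoint (Icc (x - R) (x + R)) B) (i : Fin L) :
    (μ • restrictVec B f - H (restrictVec B f)) (x, i) = 0 := by
  rw [hR.sub_apply_restrictVec hf]
  have hR0 : (0 : Fin d → ℤ) ≤ R := fun _ => Nat.cast_nonneg R
  have hxx : x ∈ Icc (x - R) (x + R) :=
    mem_Icc.mpr ⟨sub_le_self x hR0, le_add_of_nonneg_right hR0⟩
  refine sum_eq_zero fun k hk => ?_
  have hk₁ : k.1 ∈ Icc (x - R) (x + R) := (mem_product.mp hk).1
  rcases hx with hsub | hdisj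
  · simp [hsub hxx, hsub hk₁]
  · simp [disjoint_left.mp hdisj hxx, disjoint_left.mp hdisj hk₁]

lemma IsFiniteRange.norm_sub_apply_restrictVec_le (hR : IsFiniteRange H R)
    (hf : kernelApply H f = μ • f) {M : ℝ} (hM : ∀ k, ‖f k‖ ≤ M) (B : Finset (Fin d → ℤ))
    (x : Fin d → ℤ) (i : Fin L) :
    ‖(μ • restrictVec B f - H (restrictVec B f)) (x, i)‖ ≤ (2 * R + 1) ^ d * L * (‖H‖ * M) := by
  rw [hR.sub_apply_restrictVec hf]
  refine (norm_sum_le _ _).trans ?_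
  calc _ ≤ ∑ _k ∈ Icc (x - R) (x + R) ×ˢ (univ : Finset (Fin L)), ‖H‖ * M := by
        refine sum_le_sum fun k _ => ?_
        have hind : ‖((if x ∈ B then 1 else 0) - (if k.1 ∈ B then 1 else 0) : ℂ)‖ ≤ 1 := by
          split_ifs <;> simp
        rw [norm_mul, norm_mul]
        exact mul_le_of_le_one_right (by positivity) hind |>.trans
          (mul_le_mul (norm_matElem_le H _ _ _ _) (hM k) (norm_nonneg _) (norm_nonneg _))
    _ = _ := by
        rw [sum_const, card_product, card_Icc_sub_add, card_univ, Fintype.card_fin, nsmul_eq_mul]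
        push_cast
        ring

def boundaryLayer (R : ℕ) (a b : Fin d → ℤ) : Finset (Fin d → ℤ) :=
  Icc (a - R) (b + R) \ Icc (a + R) (b - R)

lemma IsFiniteRange.norm_sq_sub_restrictVec_le (hR : IsFiniteRange H R)
    (hf : kernelApply H f = μ • f) {M : ℝ} (hM : ∀ k, ‖f k‖ ≤ M) (a b : Fin d → ℤ) :
    ‖μ • restrictVec (Icc a b) f - H (restrictVec (Icc a b) f)‖ ^ 2 ≤
      #(boundaryLayer R a b) * L * ((2 * R + 1) ^ d * L * (‖H‖ * M)) ^ 2 := by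
  have hvanish : ∀ k ∉ boundaryLayer R a b ×ˢ (univ : Finset (Fin L)),
      (μ • restrictVec (Icc a b) f - H (restrictVec (Icc a b) f)) k = 0 := by
    rintro ⟨x, i⟩ hk
    have hx : ¬(x ∈ Icc (a - R) (b + R) ∧ x ∉ Icc (a + R) (b - R)) := by
      simpa [boundaryLayer] using hk
    rw [not_and_or, not_not] at hx
    exact hR.sub_apply_restrictVec_eq_zero hf
      (hx.symm.imp Finset.Icc_sub_add_subset_Icc Finset.disjoint_Icc_sub_add_Icc) i
  rw [lp.norm_sq_eq_sum _ _ hvanish]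
  calc _ ≤ ∑ _k ∈ boundaryLayer R a b ×ˢ (univ : Finset (Fin L)),
        ((2 * R + 1) ^ d * L * (‖H‖ * M)) ^ 2 :=
        sum_le_sum fun k _ => pow_le_pow_left₀ (norm_nonneg _)
          (hR.norm_sub_apply_restrictVec_le hf hM _ k.1 k.2) 2
    _ = _ := by
        rw [sum_const, card_product, card_univ, Fintype.card_fin, nsmul_eq_mul]
        push_cast
        ring

end Eigenfunction

lemma card_boundaryLayer_const (R : ℕ) (a b : ℤ) :
    #(boundaryLayer R (fun _ : Fin d => a) fun _ => b) =
      (b + 1 - a + 2 * R).toNat ^ d - (b + 1 - a - 2 * R).toNat ^ d := by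
  rw [boundaryLayer, card_sdiff_of_subset
    (Icc_subset_Icc (fun _ => by simp; omega) (fun _ => by simp; omega))]
  simp only [Pi.card_Icc, Int.card_Icc, Pi.sub_apply, Pi.add_apply, Pi.natCast_apply, prod_const,
    card_univ, Fintype.card_fin]
  congr 3 <;> ring

lemma tendsto_card_boundaryLayer_div_pow (ρ R : ℕ) :
    Tendsto (fun n : ℕ => (#(boundaryLayer R (fun _ : Fin d => 1 - (ρ : ℤ))
      fun _ => 2 * ρ * n - ρ) : ℝ) / (n : ℝ) ^ d) atTop (𝓝 0) := by
  have hside : ∀ n : ℕ, (2 * ρ * n - ρ : ℤ) + 1 - (1 - ρ) = 2 * ρ * n := fun n => by ring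
  have hcast : ∀ x : ℤ, ((x.toNat : ℕ) : ℝ) = max (x : ℝ) 0 := fun x => by
    rw [← Int.cast_natCast, Int.toNat_eq_max, Int.cast_max, Int.cast_zero]
  have heq : ∀ n : ℕ, 0 < n → (#(boundaryLayer R (fun _ : Fin d => 1 - (ρ : ℤ))
      fun _ => 2 * ρ * n - ρ) : ℝ) / (n : ℝ) ^ d =
      (max (2 * ρ + 2 * R / n : ℝ) 0) ^ d - (max (2 * ρ - 2 * R / n : ℝ) 0) ^ d := by
    intro n hn
    have hn' : (0 : ℝ) < n := by exact_mod_cast hn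
    rw [card_boundaryLayer_const, hside,
      Nat.cast_sub (Nat.pow_le_pow_left (Int.toNat_le_toNat (by omega)) d), Nat.cast_pow,
      Nat.cast_pow, hcast, hcast, sub_div, ← div_pow, ← div_pow, ← max_div_div_right hn'.le,
      ← max_div_div_right hn'.le, zero_div]
    push_cast
    field_simp
  have h := tendsto_const_div_atTop_nhds_zero_nat (2 * R : ℝ)
  have hlim := ((((tendsto_const_nhds (x := (2 * ρ : ℝ))).add h).max
    (tendsto_const_nhds (x := 0))).pow d).sub ((((tendsto_const_nhds (x := (2 * ρ : ℝ))).sub h).max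
    (tendsto_const_nhds (x := 0))).pow d)
  rw [add_zero, sub_zero, sub_self] at hlim
  exact hlim.congr' (eventually_atTop.mpr ⟨1, fun n hn => (heq n hn).symm⟩)

lemma idxZ_add_mul_injective (ρ : ℕ) :
    Function.Injective fun q : Fin (2 * ρ) × ℤ => idxZ ρ q.1 + 2 * ρ * q.2 := by
  rintro ⟨t, b⟩ ⟨t', b'⟩ h
  have hρ : (0 : ℤ) < 2 * ρ := by have := t.pos; omega
  have hdiv : ∀ (s : Fin (2 * ρ)) (c : ℤ),
      ((s : ℤ) + 2 * ρ * c) / (2 * ρ) = c ∧ ((s : ℤ) + 2 * ρ * c) % (2 * ρ) = s :=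
    fun s c => (Int.ediv_emod_unique hρ).mpr ⟨rfl, by positivity, by exact_mod_cast s.isLt⟩
  have h' : (t : ℤ) + 2 * ρ * b = t' + 2 * ρ * b' := by simp only [idxZ] at h; linarith
  have h₁ := hdiv t b
  have h₂ := hdiv t' b'
  rw [h'] at h₁
  exact Prod.ext (Fin.ext (by exact_mod_cast h₁.2.symm.trans h₂.2)) (h₁.1.symm.trans h₂.1)

lemma idxZ_add_mul_surjective (hρ : 0 < ρ) :
    Function.Surjective fun q : Fin (2 * ρ) × ℤ => idxZ ρ q.1 + 2 * ρ * q.2 := by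
  intro x
  have h2ρ : (0 : ℤ) < 2 * ρ := by omega
  have hlo := Int.emod_nonneg (x + ρ - 1) h2ρ.ne'
  have hhi := Int.emod_lt_of_pos (x + ρ - 1) h2ρ
  refine ⟨(⟨((x + ρ - 1) % (2 * ρ)).toNat, by omega⟩, (x + ρ - 1) / (2 * ρ)), ?_⟩
  have := Int.emod_add_mul_ediv (x + ρ - 1) (2 * ρ)
  simp only [idxZ, Int.toNat_of_nonneg hlo]
  linarith

def cellSite (ρ : ℕ) (t : Fin d → Fin (2 * ρ)) (b : Fin d → ℤ) : Fin d → ℤ :=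
  fun j => idxZ ρ (t j) + 2 * ρ * b j

lemma cellSite_add (t : Fin d → Fin (2 * ρ)) (b c : Fin d → ℤ) :
    cellSite ρ t (b + c) = cellSite ρ t b + (2 * ρ : ℤ) • c := by
  funext j
  simp only [cellSite, Pi.add_apply, Pi.smul_apply, smul_eq_mul]
  ring

lemma cellSite_injective : Function.Injective (Function.uncurry (cellSite (d := d) ρ)) := by
  rintro ⟨t, b⟩ ⟨t', b'⟩ h
  have hj := fun j => idxZ_add_mul_injective ρ (a₁ := (t j, b j)) (a₂ := (t' j, b' j))
    (congrFun h j)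
  simp only [Prod.mk.injEq] at hj ⊢
  exact ⟨funext fun j => (hj j).1, funext fun j => (hj j).2⟩

lemma cellSite_surjective [Nonempty (Fin d → Fin (2 * ρ))] :
    Function.Surjective (Function.uncurry (cellSite (d := d) ρ)) := by
  intro x
  have hρ : ∀ j : Fin d, 0 < ρ := fun j => by
    have := (Classical.arbitrary (Fin d → Fin (2 * ρ)) j).pos
    omega
  choose q hq using fun j => idxZ_add_mul_surjective (hρ j) (x j)
  exact ⟨(fun j => (q j).1, fun j => (q j).2), funext hq⟩

def cellEquiv (ρ : ℕ) [Nonempty (Fin d → Fin (2 * ρ))] :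
    (Fin d → Fin (2 * ρ)) × (Fin d → ℤ) ≃ (Fin d → ℤ) :=
  Equiv.ofBijective _ ⟨cellSite_injective, cellSite_surjective⟩

lemma perMat_apply (H : Ell2 d L →L[ℂ] Ell2 d L) (t t' : Fin d → Fin (2 * ρ)) (i l : Fin L) :
    perMat H ρ (t, i) (t', l) = ∑ᶠ a, matElem H (cellSite ρ t 0) (cellSite ρ t' a) i l := by
  unfold perMat cellSite
  simp

section PeriodicExtension

variable [Nonempty (Fin d → Fin (2 * ρ))]

def perExt (v : (Fin d → Fin (2 * ρ)) × Fin L → ℂ) : (Fin d → ℤ) × Fin L → ℂ :=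
  fun k => v (((cellEquiv ρ).symm k.1).1, k.2)

lemma perExt_cellSite (v : (Fin d → Fin (2 * ρ)) × Fin L → ℂ) (t : Fin d → Fin (2 * ρ))
    (b : Fin d → ℤ) (i : Fin L) : perExt v (cellSite ρ t b, i) = v (t, i) := by
  simp only [perExt]
  rw [show cellSite ρ t b = cellEquiv ρ (t, b) from rfl, Equiv.symm_apply_apply]

lemma perExt_add_smul (v : (Fin d → Fin (2 * ρ)) × Fin L → ℂ) (c x : Fin d → ℤ) (i : Fin L) :
    perExt v (x + (2 * ρ : ℤ) • c, i) = perExt v (x, i) := by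
  obtain ⟨⟨t, b⟩, rfl⟩ := (cellEquiv ρ).surjective x
  change perExt v (cellSite ρ t b + _, i) = perExt v (cellSite ρ t b, i)
  rw [← cellSite_add, perExt_cellSite, perExt_cellSite]

lemma norm_perExt_le (v : (Fin d → Fin (2 * ρ)) × Fin L → ℂ) (k : (Fin d → ℤ) × Fin L) :
    ‖perExt v k‖ ≤ ‖v‖ :=
  norm_le_pi_norm v _

theorem kernelApply_perExt (hR : IsFiniteRange H R)
    (hcell : ∀ b : Fin d → ℤ, (2 * ρ : ℤ) • b ∈ periodLattice H) {μ : ℂ}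
    {v : (Fin d → Fin (2 * ρ)) × Fin L → ℂ} (hv : perMat H ρ *ᵥ v = μ • v) :
    kernelApply H (perExt v) = μ • perExt v := by
  ext ⟨x, i⟩
  obtain ⟨⟨t₀, b₀⟩, rfl⟩ := (cellEquiv ρ).surjective x
  change kernelApply H (perExt v) (cellSite ρ t₀ b₀, i) = μ * perExt v (cellSite ρ t₀ b₀, i)
  rw [← zero_add b₀, cellSite_add, kernelApply_add_of_mem_periodLattice (hcell b₀)
    (perExt_add_smul v b₀), perExt_add_smul, perExt_cellSite, ← smul_eq_mul, ← Pi.smul_apply, ← hv]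
  set Ψ : ((Fin d → Fin (2 * ρ)) × Fin L) × (Fin d → ℤ) ≃ (Fin d → ℤ) × Fin L :=
    (Equiv.prodAssoc _ _ _).trans (((Equiv.refl _).prodCongr (Equiv.prodComm _ _)).trans
      ((Equiv.prodAssoc _ _ _).symm.trans ((cellEquiv ρ).prodCongr (Equiv.refl _))))
  have hΨ : ∀ q, Ψ q = (cellSite ρ q.1.1 q.2, q.1.2) := fun _ => rfl
  have hfin : (Function.support fun k : (Fin d → ℤ) × Fin L =>
      matElem H (cellSite ρ t₀ 0) k.1 i k.2 * perExt v k).Finite :=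
    (finite_toSet _).subset fun _ hk => not_not.mp fun h => hk (hR.matElem_mul_eq_zero _ i h)
  unfold kernelApply
  rw [← finsum_comp_equiv Ψ, finsum_curry _ (hfin.preimage Ψ.injective.injOn),
    finsum_eq_sum_of_fintype]
  refine Finset.sum_congr rfl fun ⟨t, l⟩ _ => ?_
  simp only [hΨ, perExt_cellSite, perMat_apply, finsum_mul]

lemma norm_sq_restrictVec_perExt_ge (v : (Fin d → Fin (2 * ρ)) × Fin L → ℂ)
    (t₀ : Fin d → Fin (2 * ρ)) (i₀ : Fin L) (n : ℕ) :
    (n : ℝ) ^ d * ‖v (t₀, i₀)‖ ^ 2 ≤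
      ‖restrictVec (Icc (fun _ : Fin d => 1 - (ρ : ℤ)) fun _ => 2 * ρ * n - ρ) (perExt v)‖ ^ 2 := by
  set B : Finset (Fin d → ℤ) := Icc (fun _ => 1 - (ρ : ℤ)) fun _ => 2 * ρ * n - ρ
  set cells : Finset (Fin d → ℤ) := Icc 0 fun _ => (n : ℤ) - 1
  have hcells : #cells = n ^ d := by
    simp [cells, Pi.card_Icc, Int.card_Icc]
  have hmaps : ∀ b ∈ cells, cellSite ρ t₀ b ∈ B := by
    intro b hb
    simp only [cells, B, mem_Icc, Pi.le_def, Pi.zero_apply] at hb ⊢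
    refine ⟨fun j => ?_, fun j => ?_⟩ <;>
    · have := (t₀ j).isLt
      have := hb.1 j
      have := hb.2 j
      simp only [cellSite, idxZ]
      nlinarith
  have hinj : Set.InjOn (fun b => (cellSite ρ t₀ b, i₀)) cells := fun b _ b' _ h =>
    congrArg Prod.snd (cellSite_injective (a₁ := (t₀, b)) (a₂ := (t₀, b')) (congrArg Prod.fst h))
  rw [lp.norm_sq_eq_sum _ (B ×ˢ univ)
    fun k hk => if_neg fun h => hk (mem_product.mpr ⟨h, mem_univ _⟩)]
  calc (n : ℝ) ^ d * ‖v (t₀, i₀)‖ ^ 2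
      = ∑ b ∈ cells, ‖restrictVec B (perExt v) (cellSite ρ t₀ b, i₀)‖ ^ 2 := by
        rw [sum_congr rfl fun b hb => by
          rw [restrictVec_apply, if_pos (hmaps b hb), perExt_cellSite],
          sum_const, hcells, nsmul_eq_mul, Nat.cast_pow]
    _ = ∑ k ∈ cells.image fun b => (cellSite ρ t₀ b, i₀), ‖restrictVec B (perExt v) k‖ ^ 2 := by
        rw [sum_image hinj]
    _ ≤ _ := sum_le_sum_of_subset_of_nonneg
        (image_subset_iff.mpr fun b hb => mem_product.mpr ⟨hmaps b hb, mem_univ _⟩)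
        fun _ _ _ => by positivity

end PeriodicExtension

end LatticeOperator

open LatticeOperator

theorem stmt9_general {d L : ℕ} (R : ℕ) (H : Ell2 d L →L[ℂ] Ell2 d L)
    (hrange : ∀ x y i l, (∃ j, (R : ℤ) < |x j - y j|) → matElem H x y i l = 0)
    (p : Fin d → ℕ)
    (hper : ∀ (j : Fin d) x y i l,
      matElem H (x + (p j : ℤ) • Pi.single j 1) (y + (p j : ℤ) • Pi.single j 1) i l =
        matElem H x y i l)
    (ρ : ℕ) (hρ : ∀ j, (p j : ℤ) ∣ 2 * ρ) :
    spectrum ℂ (perMat H ρ) ⊆ spectrum ℂ H := by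
  intro μ hμ
  obtain ⟨v, hv0, hv⟩ := Matrix.exists_mulVec_eq_smul_of_mem_spectrum hμ
  obtain ⟨⟨t₀, i₀⟩, hk₀⟩ := Function.ne_iff.mp hv0
  have : Nonempty (Fin d → Fin (2 * ρ)) := ⟨t₀⟩
  have hR : IsFiniteRange H R := hrange
  have hf := kernelApply_perExt hR
    (fun b => mem_periodLattice_of_dvd hper fun j => (hρ j).mul_right (b j)) hv
  by_contra hμH
  obtain ⟨K, hK⟩ := ContinuousLinearMap.exists_norm_le_of_notMem_spectrum hμH
  set C := K ^ 2 * (L * ((2 * R + 1) ^ d * L * (‖H‖ * ‖v‖)) ^ 2)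
  have hweyl : ∀ n : ℕ, (n : ℝ) ^ d * ‖v (t₀, i₀)‖ ^ 2 ≤
      C * #(boundaryLayer R (fun _ : Fin d => 1 - (ρ : ℤ)) fun _ => 2 * ρ * n - ρ) := fun n =>
    calc _ ≤ _ := norm_sq_restrictVec_perExt_ge v t₀ i₀ n
      _ ≤ (K * _) ^ 2 := pow_le_pow_left₀ (norm_nonneg _) (hK _) 2
      _ ≤ K ^ 2 * (#(boundaryLayer R (fun _ : Fin d => 1 - (ρ : ℤ)) fun _ => 2 * ρ * n - ρ) *
            L * ((2 * R + 1) ^ d * L * (‖H‖ * ‖v‖)) ^ 2) := by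
        rw [mul_pow]
        exact mul_le_mul_of_nonneg_left
          (hR.norm_sq_sub_restrictVec_le hf (norm_perExt_le v) _ _) (sq_nonneg K)
      _ = _ := by ring
  have hlim := (tendsto_card_boundaryLayer_div_pow (d := d) ρ R).const_mul C
  rw [mul_zero] at hlim
  have hpos : 0 < ‖v (t₀, i₀)‖ ^ 2 := pow_pos (norm_pos_iff.mpr hk₀) 2
  refine hpos.not_ge (ge_of_tendsto hlim (eventually_atTop.mpr ⟨1, fun n hn => ?_⟩))
  rw [← mul_div_assoc, le_div_iff₀ (by positivity), mul_comm]
  exact hweyl n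

/-- for a bounded selfadjoint finite range periodic operator `H` on
`ℓ²(ℤ^d, ℂ^L)` and `ρ` such that `2ρ` is a multiple of all periods, the spectrum of the
periodized matrix `H^per_ρ` is contained in the spectrum of `H`. -/
theorem stmt9 {d L : ℕ} (R : ℕ) (H : Ell2 d L →L[ℂ] Ell2 d L)
    (hH : IsSelfAdjoint H)
    (hrange : ∀ x y i l, (∃ j, (R : ℤ) < |x j - y j|) → matElem H x y i l = 0)
    (p : Fin d → ℕ) (hp : ∀ j, 0 < p j)
    (hper : ∀ (j : Fin d) x y i l,
      matElem H (x + (p j : ℤ) • Pi.single j 1) (y + (p j : ℤ) • Pi.single j 1) i l =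
        matElem H x y i l)
    (ρ : ℕ) (hρ : ∀ j, (p j : ℤ) ∣ 2 * ρ) :
    spectrum ℂ (perMat H ρ) ⊆ spectrum ℂ H :=
  stmt9_general R H hrange p hper ρ hρ
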